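/- Let T be a bounded linear operator on a complex Banach space X, and suppose that for every nonempty relatively open subset U of the spectrum σ(T), the glocal spectral subspace 𝒳_T(closure(U)) is dense in X. Then for every nontrivial closed subspace M of X* invariant under the adjoint T*, one has σ(T*) ⊆ σ(T*|_M) ⊆ η(σ(T*)), where η(σ(T*)) is the full spectrum of T*. -/

import Mathlib

open Set Filter Topology Bornology Complex

noncomputable section




variable {X : Type*} [NormedAddCommGroup X] [NormedSpace ℂ X]

/-- The glocal spectral subspace `𝒳_T(F)` of a bounded operator `T`. -/
def glocalSubspace (T : X →L[ℂ] X) (F : Set ℂ) : Set X :=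
  {x | ∃ f : ℂ → X, AnalyticOnNhd ℂ f Fᶜ ∧ ∀ z ∈ Fᶜ, T (f z) - z • f z = x}

/-- The local resolvent set `ρ_T(x)`. -/
def localResolventSet (T : X →L[ℂ] X) (x : X) : Set ℂ :=
  ⋃₀ {U : Set ℂ | IsOpen U ∧ ∃ f : ℂ → X, AnalyticOnNhd ℂ f U ∧ ∀ z ∈ U, T (f z) - z • f z = x}

/-- The local spectrum `σ_T(x)`. -/
def localSpectrum (T : X →L[ℂ] X) (x : X) : Set ℂ := (localResolventSet T x)ᶜ

/-- The local spectral subspace `X_T(F)`. -/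
def localSubspace (T : X →L[ℂ] X) (F : Set ℂ) : Set X := {x | localSpectrum T x ⊆ F}

/-- Dunford's property (C). -/
def HasPropertyC (T : X →L[ℂ] X) : Prop :=
  ∀ F : Set ℂ, IsClosed F → IsClosed (localSubspace T F)

/-- The single-valued extension property. -/
def HasSVEP (T : X →L[ℂ] X) : Prop :=
  ∀ U : Set ℂ, IsOpen U → ∀ f : ℂ → X, AnalyticOnNhd ℂ f U →
    (∀ z ∈ U, T (f z) - z • f z = 0) → ∀ z ∈ U, f z = 0

/-- The point spectrum of an operator. -/
def pointSpectrum (T : X →L[ℂ] X) : Set ℂ := {μ : ℂ | ∃ x : X, x ≠ 0 ∧ T x = μ • x}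

/-- The local spectral radius `r_T(x) = limsup_n ‖Tⁿx‖^(1/n)`. -/
def localSpectralRadius (T : X →L[ℂ] X) (x : X) : ℝ :=
  Filter.limsup (fun n : ℕ => ‖(T ^ n) x‖ ^ (1 / (n : ℝ))) Filter.atTop

/-- The adjoint operator `T*` acting on the dual space `X*`. -/
def dualOp (T : X →L[ℂ] X) : StrongDual ℂ X →L[ℂ] StrongDual ℂ X :=
  (ContinuousLinearMap.compL ℂ X X ℂ).flip T

/-- Restriction of an operator to an invariant subspace. -/
def restrictOp (T : X →L[ℂ] X) (M : Submodule ℂ X) (h : ∀ x ∈ M, T x ∈ M) : M →L[ℂ] M :=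
  (T.comp M.subtypeL).codRestrict M (fun x => h x.1 x.2)

/-- The full spectrum `η(K)`: the union of `K` with all the bounded connected
components of its complement. -/
def fullSpectrum (K : Set ℂ) : Set ℂ :=
  K ∪ {z : ℂ | z ∉ K ∧ Bornology.IsBounded (connectedComponentIn Kᶜ z)}

/-- `U` is a nonempty relatively open subset of `σ(T)`. -/
def RelativelyOpenInSpectrum (T : X →L[ℂ] X) (U : Set ℂ) : Prop :=
  U.Nonempty ∧ ∃ V : Set ℂ, IsOpen V ∧ U = spectrum ℂ T ∩ V

/-!
For the second inclusion, the operators leaving a closed subspace `M` invariant form a closed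
subalgebra of the bounded operators, and restriction to `M` is an algebra homomorphism out of it.
So `σ(T*|_M)` lies in the spectrum of `T*` relative to that subalgebra, which can only add bounded
components of the resolvent set `ρ(T*)`.

For the first, suppose `λ ∈ σ(T*) ⊆ σ(T)` but `λ ∉ σ(T*|_M)`, take an open disc `B` around `λ`
whose closure lies in `ρ(T*|_M)`, and let `F` be the closure of `σ(T) ∩ B`. For `φ ∈ M` and `x ∈ 𝒳_T(F)`, with
`(T - z)f(z) = x`, the functions `z ↦ -φ(f z)` on `ℂ ∖ F` and `z ↦ ((z - T*|_M)⁻¹ φ)(x)` on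
`ρ(T*|_M)` agree where both are defined, so they glue to an entire function vanishing at
infinity. Hence `((z - T*|_M)⁻¹ φ)(x) = 0`; as `𝒳_T(F)` is `T`-invariant, the same holds for
`T x`, and applying `(z - T*|_M)⁻¹ φ` to `z x - T x` gives `φ(x) = 0`. Since `𝒳_T(F)` is dense,
`φ = 0`, so `M = {0}`.
-/

section InvariantSubalgebra

variable {𝕜 E : Type*} [NontriviallyNormedField 𝕜] [NormedAddCommGroup E] [NormedSpace 𝕜 E]

def invariantSubalgebra (M : Submodule 𝕜 E) : Subalgebra 𝕜 (E →L[𝕜] E) where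
  carrier := {A | ∀ x ∈ M, A x ∈ M}
  mul_mem' ha hb x hx := ha _ (hb x hx)
  add_mem' ha hb x hx := M.add_mem (ha x hx) (hb x hx)
  algebraMap_mem' r x hx := by simpa [Algebra.algebraMap_eq_smul_one] using M.smul_mem r hx

theorem mem_invariantSubalgebra {M : Submodule 𝕜 E} {A : E →L[𝕜] E} :
    A ∈ invariantSubalgebra M ↔ ∀ x ∈ M, A x ∈ M :=
  Iff.rfl

theorem isClosed_invariantSubalgebra {M : Submodule 𝕜 E} (hM : IsClosed (M : Set E)) :
    IsClosed (invariantSubalgebra M : Set (E →L[𝕜] E)) := by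
  have : (invariantSubalgebra M : Set (E →L[𝕜] E)) = ⋂ x ∈ M, (fun A => A x) ⁻¹' M := by
    ext A
    simp only [SetLike.mem_coe, mem_invariantSubalgebra, Set.mem_iInter, Set.mem_preimage]
  rw [this]
  exact isClosed_biInter fun x _ => hM.preimage (ContinuousLinearMap.apply 𝕜 E x).continuous

end InvariantSubalgebra

theorem coe_restrictOp_apply (A : X →L[ℂ] X) {M : Submodule ℂ X} (hinv : ∀ x ∈ M, A x ∈ M)
    (v : M) : (restrictOp A M hinv v : X) = A v :=
  rfl

def restrictAlgHom (M : Submodule ℂ X) : invariantSubalgebra M →ₐ[ℂ] (M →L[ℂ] M) where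
  toFun A := restrictOp A M (mem_invariantSubalgebra.mp A.2)
  map_one' := rfl
  map_mul' _ _ := rfl
  map_zero' := rfl
  map_add' _ _ := rfl
  commutes' _ := rfl

theorem spectrum_restrictOp_subset_fullSpectrum [CompleteSpace X] (A : X →L[ℂ] X)
    {M : Submodule ℂ X} (hM : IsClosed (M : Set X)) (hinv : ∀ x ∈ M, A x ∈ M) :
    spectrum ℂ (restrictOp A M hinv) ⊆ fullSpectrum (spectrum ℂ A) := by
  have : IsClosed (invariantSubalgebra M : Set (X →L[ℂ] X)) := isClosed_invariantSubalgebra hM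
  let A' : invariantSubalgebra M := ⟨A, mem_invariantSubalgebra.mpr hinv⟩
  intro z hz
  have hz' : z ∈ spectrum ℂ A' := AlgHom.spectrum_apply_subset (restrictAlgHom M) A' hz
  by_cases hzA : z ∈ spectrum ℂ A
  · exact Or.inl hzA
  · exact Or.inr ⟨hzA, Subalgebra.spectrum_isBounded_connectedComponentIn
      (invariantSubalgebra M) A' hz'⟩

/-- Liouville's theorem, for an entire function glued from two pieces. -/
theorem Complex.eqOn_zero_of_differentiableOn_union {E : Type*} [NormedAddCommGroup E]
    [NormedSpace ℂ E] {U V : Set ℂ} {f g : ℂ → E} (hU : IsOpen U) (hV : IsOpen V)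
    (hUV : U ∪ V = univ) (hf : DifferentiableOn ℂ f U) (hg : DifferentiableOn ℂ g V)
    (hfg : EqOn f g (U ∩ V)) (hV_cobounded : V ∈ cobounded ℂ)
    (hg_tendsto : Tendsto g (cobounded ℂ) (𝓝 0)) :
    EqOn g 0 V := by
  classical
  let G := V.piecewise g f
  have hG : Differentiable ℂ G := by
    intro z
    by_cases hzV : z ∈ V
    · refine (hg.differentiableAt (hV.mem_nhds hzV)).congr_of_eventuallyEq ?_
      filter_upwards [hV.mem_nhds hzV] with w hw using V.piecewise_eq_of_mem g f hw
    · have hzU : z ∈ U := (mem_union _ _ _).mp (hUV ▸ mem_univ z) |>.resolve_right hzV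
      refine (hf.differentiableAt (hU.mem_nhds hzU)).congr_of_eventuallyEq ?_
      filter_upwards [hU.mem_nhds hzU] with w hw
      by_cases hwV : w ∈ V
      · exact (V.piecewise_eq_of_mem g f hwV).trans (hfg ⟨hw, hwV⟩).symm
      · exact V.piecewise_eq_of_notMem g f hwV
  have hG_tendsto : Tendsto G (cocompact ℂ) (𝓝 0) := by
    rw [← Metric.cobounded_eq_cocompact]
    refine hg_tendsto.congr' ?_
    filter_upwards [hV_cobounded] with w hw using (V.piecewise_eq_of_mem g f hw).symm
  intro z hz
  rw [← V.piecewise_eq_of_mem g f hz]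
  exact hG.apply_eq_of_tendsto_cocompact z hG_tendsto

section Resolvent

variable {𝕜 E : Type*} [NontriviallyNormedField 𝕜] [NormedAddCommGroup E] [NormedSpace 𝕜 E]
  (A : E →L[𝕜] E)

theorem smul_resolvent_apply_sub {z : 𝕜} (hz : z ∈ resolventSet 𝕜 A) (v : E) :
    z • resolvent A z v - A (resolvent A z v) = v := by
  have h : (algebraMap 𝕜 (E →L[𝕜] E) z - A) * resolvent A z = 1 := by
    rw [spectrum.resolvent_eq hz]
    exact hz.mul_val_inv
  simpa [Algebra.algebraMap_eq_smul_one, sub_smul] using congr($h v)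

variable [CompleteSpace E] (v : E)

theorem differentiableOn_resolvent_apply :
    DifferentiableOn 𝕜 (fun z => resolvent A z v) (resolventSet 𝕜 A) := fun _ hz =>
  ((ContinuousLinearMap.apply 𝕜 E v).differentiableAt.comp _
    (spectrum.hasDerivAt_resolvent_const_left hz).differentiableAt).differentiableWithinAt

theorem tendsto_resolvent_apply_cobounded :
    Tendsto (fun z => resolvent A z v) (cobounded 𝕜) (𝓝 0) := by
  have h := ((ContinuousLinearMap.apply 𝕜 E v).continuous.tendsto 0).comp
    (spectrum.resolvent_tendsto_cobounded (𝕜 := 𝕜) A)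
  rwa [map_zero] at h

theorem resolventSet_mem_cobounded : resolventSet 𝕜 A ∈ cobounded 𝕜 := by
  simpa [spectrum] using isBounded_def.mp (spectrum.isBounded (𝕜 := 𝕜) A)

end Resolvent

theorem eqOn_zero_of_resolvent_apply_continues {E W : Type*} [NormedAddCommGroup E]
    [NormedSpace ℂ E] [CompleteSpace E] [NormedAddCommGroup W] [NormedSpace ℂ W]
    (A : E →L[ℂ] E) (v : E) (ℓ : E →L[ℂ] W) {K : Set ℂ} (hK : IsClosed K)
    (hKA : K ⊆ resolventSet ℂ A) {p : ℂ → W} (hp : DifferentiableOn ℂ p Kᶜ)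
    (hpA : EqOn p (fun z => ℓ (resolvent A z v)) (Kᶜ ∩ resolventSet ℂ A)) :
    EqOn (fun z => ℓ (resolvent A z v)) 0 (resolventSet ℂ A) := by
  have hℓ_tendsto := (ℓ.continuous.tendsto 0).comp (tendsto_resolvent_apply_cobounded A v)
  rw [map_zero] at hℓ_tendsto
  exact Complex.eqOn_zero_of_differentiableOn_union hK.isOpen_compl
    (spectrum.isOpen_resolventSet A) (compl_subset_iff_union.mp (by rwa [compl_compl])) hp
    (ℓ.differentiable.comp_differentiableOn (differentiableOn_resolvent_apply A v)) hpA
    (resolventSet_mem_cobounded A) hℓ_tendsto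

theorem dualOp_apply (T : X →L[ℂ] X) (φ : StrongDual ℂ X) (y : X) :
    dualOp T φ y = φ (T y) :=
  rfl

def dualOpMonoidHom : (X →L[ℂ] X) →* (StrongDual ℂ X →L[ℂ] StrongDual ℂ X)ᵐᵒᵖ where
  toFun T := MulOpposite.op (dualOp T)
  map_one' := rfl
  map_mul' _ _ := rfl

theorem dualOp_algebraMap_sub (T : X →L[ℂ] X) (z : ℂ) :
    dualOp (algebraMap ℂ (X →L[ℂ] X) z - T) =
      -- instance search for the `Semiring` structure times out with plain `algebraMap`
      @algebraMap ℂ (StrongDual ℂ X →L[ℂ] StrongDual ℂ X) _ inferInstance inferInstance z -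
        dualOp T := by
  ext φ y
  simp [dualOp_apply, Algebra.algebraMap_eq_smul_one]

theorem spectrum_dualOp_subset (T : X →L[ℂ] X) : spectrum ℂ (dualOp T) ⊆ spectrum ℂ T :=
  fun z hz hunit => spectrum.mem_iff.mp hz <| dualOp_algebraMap_sub T z ▸
    isUnit_op.mp ((spectrum.mem_resolventSet_iff.mp hunit).map dualOpMonoidHom)

theorem apply_mem_glocalSubspace (T : X →L[ℂ] X) {F : Set ℂ} {x : X}
    (hx : x ∈ glocalSubspace T F) : T x ∈ glocalSubspace T F := by
  obtain ⟨f, hf, hfx⟩ := hx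
  refine ⟨fun z => T (f z), fun z hz => (T.analyticAt _).comp (hf z hz), fun z hz => ?_⟩
  rw [← hfx z hz, map_sub, map_smul]

section RestrictDualOp

variable (T : X →L[ℂ] X) {M : Submodule ℂ (StrongDual ℂ X)} (hinv : ∀ φ ∈ M, dualOp T φ ∈ M)

theorem resolvent_restrictOp_dualOp_apply_sub {z : ℂ}
    (hz : z ∈ resolventSet ℂ (restrictOp (dualOp T) M hinv)) (φ : M) (y : X) :
    (resolvent (restrictOp (dualOp T) M hinv) z φ : StrongDual ℂ X) (z • y - T y) =
      (φ : StrongDual ℂ X) y := by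
  have h := congr(($(smul_resolvent_apply_sub _ hz φ) : StrongDual ℂ X) y)
  simpa [coe_restrictOp_apply, dualOp_apply] using h

theorem resolvent_restrictOp_dualOp_apply_eq_zero [CompleteSpace M] {F : Set ℂ}
    (hF : IsClosed F) (hFρ : F ⊆ resolventSet ℂ (restrictOp (dualOp T) M hinv)) (φ : M) {x : X}
    (hx : x ∈ glocalSubspace T F) {z : ℂ}
    (hz : z ∈ resolventSet ℂ (restrictOp (dualOp T) M hinv)) :
    (resolvent (restrictOp (dualOp T) M hinv) z φ : StrongDual ℂ X) x = 0 := by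
  obtain ⟨f, hf, hfx⟩ := hx
  -- The ascription fixes the instances on `M`; without it, unification with the type of
  -- `restrictOp` times out.
  let ℓ : M →L[ℂ] ℂ := (ContinuousLinearMap.apply ℂ ℂ x).comp M.subtypeL
  refine eqOn_zero_of_resolvent_apply_continues (restrictOp (dualOp T) M hinv) φ ℓ hF hFρ
    (p := fun w => -(φ : StrongDual ℂ X) (f w)) ?_ ?_ hz
  · exact fun w hw => ((φ : StrongDual ℂ X).differentiableAt.comp w
      (hf w hw).differentiableAt).neg.differentiableWithinAt
  · rintro w ⟨hwF, hwρ⟩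
    have h := resolvent_restrictOp_dualOp_apply_sub T hinv hwρ φ (f w)
    rw [show w • f w - T (f w) = -x by rw [← hfx w hwF]; abel, map_neg] at h
    simp [ℓ, ← h]

theorem apply_eq_zero_of_mem_glocalSubspace [CompleteSpace M] {F : Set ℂ} (hF : IsClosed F)
    (hFρ : F ⊆ resolventSet ℂ (restrictOp (dualOp T) M hinv)) (φ : M) {x : X}
    (hx : x ∈ glocalSubspace T F) : (φ : StrongDual ℂ X) x = 0 := by
  obtain ⟨z, hz⟩ :=
    Filter.nonempty_of_mem (resolventSet_mem_cobounded (restrictOp (dualOp T) M hinv))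
  rw [← resolvent_restrictOp_dualOp_apply_sub T hinv hz φ x, map_sub, map_smul,
    resolvent_restrictOp_dualOp_apply_eq_zero T hinv hF hFρ φ hx hz,
    resolvent_restrictOp_dualOp_apply_eq_zero T hinv hF hFρ φ (apply_mem_glocalSubspace T hx) hz,
    smul_zero, sub_zero]

end RestrictDualOp

theorem spectrum_dualOp_subset_spectrum_restrictOp (T : X →L[ℂ] X)
    (hdense : ∀ U : Set ℂ, RelativelyOpenInSpectrum T U → Dense (glocalSubspace T (closure U)))
    {M : Submodule ℂ (StrongDual ℂ X)} (hM : IsClosed (M : Set (StrongDual ℂ X)))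
    (hMbot : M ≠ ⊥) (hinv : ∀ φ ∈ M, dualOp T φ ∈ M) :
    spectrum ℂ (dualOp T) ⊆ spectrum ℂ (restrictOp (dualOp T) M hinv) := by
  have := hM.completeSpace_coe
  intro μ hμ
  by_contra hμS
  obtain ⟨r, hr, hball⟩ := Metric.nhds_basis_closedBall.mem_iff.mp
    ((spectrum.isOpen_resolventSet (𝕜 := ℂ) (restrictOp (dualOp T) M hinv)).mem_nhds
      (not_not.mp hμS))
  let U := spectrum ℂ T ∩ Metric.ball μ r
  have hU : RelativelyOpenInSpectrum T U :=
    ⟨⟨μ, spectrum_dualOp_subset T hμ, Metric.mem_ball_self hr⟩, _, Metric.isOpen_ball, rfl⟩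
  have hUρ : closure U ⊆ resolventSet ℂ (restrictOp (dualOp T) M hinv) :=
    (closure_mono inter_subset_right).trans (Metric.closure_ball_subset_closedBall.trans hball)
  refine hMbot ((Submodule.eq_bot_iff M).mpr fun φ hφ => ?_)
  refine DFunLike.coe_injective (Continuous.ext_on (hdense U hU) φ.continuous continuous_const ?_)
  exact fun x hx => apply_eq_zero_of_mem_glocalSubspace T hinv isClosed_closure hUρ ⟨φ, hφ⟩ hx

theorem adjoint_spectrum_restrict_general {X : Type*} [NormedAddCommGroup X] [NormedSpace ℂ X]
    (T : X →L[ℂ] X)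
    (hdense : ∀ U : Set ℂ, RelativelyOpenInSpectrum T U →
      Dense (glocalSubspace T (closure U)))
    (M : Submodule ℂ (StrongDual ℂ X)) (hMclosed : IsClosed (M : Set (StrongDual ℂ X)))
    (hMbot : M ≠ ⊥)
    (hinv : ∀ x ∈ M, dualOp T x ∈ M) :
    spectrum ℂ (dualOp T) ⊆ spectrum ℂ (restrictOp (dualOp T) M hinv) ∧
      spectrum ℂ (restrictOp (dualOp T) M hinv) ⊆ fullSpectrum (spectrum ℂ (dualOp T)) :=
  ⟨spectrum_dualOp_subset_spectrum_restrictOp T hdense hMclosed hMbot hinv,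
    spectrum_restrictOp_subset_fullSpectrum (dualOp T) hMclosed hinv⟩

/-- Under the density assumption on glocal spectral subspaces of `T`, for every nontrivial
closed invariant subspace `M` of the adjoint `T*` one has
`σ(T*) ⊆ σ(T*|_M) ⊆ η(σ(T*))`. -/
theorem adjoint_spectrum_restrict {X : Type*} [NormedAddCommGroup X] [NormedSpace ℂ X]
    [CompleteSpace X] (T : X →L[ℂ] X)
    (hdense : ∀ U : Set ℂ, RelativelyOpenInSpectrum T U →
      Dense (glocalSubspace T (closure U)))
    (M : Submodule ℂ (StrongDual ℂ X)) (hMclosed : IsClosed (M : Set (StrongDual ℂ X)))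
    (hMbot : M ≠ ⊥) (hMtop : M ≠ ⊤)
    (hinv : ∀ x ∈ M, dualOp T x ∈ M) :
    spectrum ℂ (dualOp T) ⊆ spectrum ℂ (restrictOp (dualOp T) M hinv) ∧
      spectrum ℂ (restrictOp (dualOp T) M hinv) ⊆ fullSpectrum (spectrum ℂ (dualOp T)) :=
  adjoint_spectrum_restrict_general T hdense M hMclosed hMbot hinv

end
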